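/- Given a real number a and an integer m ≥ 1, there is a constant C = C(a, m) > 0 such that |∂_t^{m+1}[t^a e_m(tλ)]| ≤ C t^a |λ|^{m+1} e^{t Re λ} for all t > 0 and all λ ∈ ℂ with Re λ > 0. -/

import Mathlib

/-!
By the Leibniz rule, `∂ₜ^{m+1} [t^a e_m(tλ)] = ∑ᵢ C(m+1, i) (∂ₜ^i t^a) λ^{m+1-i} e_{i-1}(tλ)`, since
`e_k' = e_{k-1}`, and `∂ₜ^i t^a = a (a - 1) ⋯ (a - i + 1) t^{a-i}`. For `Re λ ≥ 0` the tails satisfy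
`|e_{i-1}(tλ)| ≤ (t|λ|)^i e^{t Re λ}`, by induction on `i`: `e_{i-1}(0) = 0` for `i ≥ 1`, and the
`t`-derivative `λ e_{i-2}(tλ)` is bounded on `[0, t]` by the previous case, because the bound is
increasing in `t`; the mean value inequality concludes. So every Leibniz term is a constant times
`t^a |λ|^{m+1} e^{t Re λ}`.
-/

/-- The truncated exponential `e_m(λ) = e^λ − Σ_{j=0}^m λ^j/j!`. -/
noncomputable def ek (m : ℕ) (l : ℂ) : ℂ :=
  Complex.exp l - ∑ j ∈ Finset.range (m + 1), l ^ j / (Nat.factorial j)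

open Finset

theorem norm_iteratedDeriv_smul_le {𝕜 𝔸 F : Type*} [NontriviallyNormedField 𝕜]
    [NormedRing 𝔸] [NormedAlgebra 𝕜 𝔸] [NormedAddCommGroup F] [NormedSpace 𝕜 F] [Module 𝔸 F]
    [IsBoundedSMul 𝔸 F] [IsScalarTower 𝕜 𝔸 F] {f : 𝕜 → 𝔸} {g : 𝕜 → F} {n : ℕ} {x : 𝕜}
    (hf : ContDiffAt 𝕜 n f x) (hg : ContDiffAt 𝕜 n g x) :
    ‖iteratedDeriv n (f • g) x‖ ≤ ∑ i ∈ range (n + 1),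
      n.choose i * (‖iteratedDeriv i f x‖ * ‖iteratedDeriv (n - i) g x‖) := by
  simp only [← iteratedDerivWithin_univ]
  rw [iteratedDerivWithin_smul (Set.mem_univ x) uniqueDiffOn_univ hf.contDiffWithinAt
    hg.contDiffWithinAt]
  refine (norm_sum_le _ _).trans (sum_le_sum fun i _ => ?_)
  exact (norm_nsmul_le ..).trans (mul_le_mul_of_nonneg_left (norm_smul_le ..) (by positivity))

theorem norm_iteratedDeriv_rpow_const {t : ℝ} (ht : 0 < t) (a : ℝ) (i : ℕ) :
    ‖iteratedDeriv i (fun u : ℝ => u ^ a) t‖ = |(descPochhammer ℝ i).eval a| * t ^ a / t ^ i := by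
  rw [iteratedDeriv_eq_iterate, Real.iter_deriv_rpow_const, Real.rpow_sub_natCast ht.ne', norm_mul,
    Real.norm_eq_abs, Real.norm_of_nonneg (by positivity), mul_div_assoc]

/-- `expTail (m + 1) = ek m`, and `expTail 0 = exp` plays the role of `e_{-1}`. -/
noncomputable def expTail (n : ℕ) (z : ℂ) : ℂ :=
  Complex.exp z - ∑ j ∈ range n, z ^ j / j.factorial

theorem ek_eq_expTail (m : ℕ) : ek m = expTail (m + 1) := rfl

@[simp]
theorem expTail_zero : expTail 0 = Complex.exp := by
  ext z; simp [expTail]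

@[simp]
theorem expTail_succ_apply_zero (n : ℕ) : expTail (n + 1) 0 = 0 := by
  simp [expTail, sum_range_succ']

theorem hasDerivAt_expTail_succ (n : ℕ) (z : ℂ) :
    HasDerivAt (expTail (n + 1)) (expTail n z) z := by
  have hsum : HasDerivAt (fun w : ℂ => ∑ j ∈ range (n + 1), w ^ j / j.factorial)
      (∑ j ∈ range n, z ^ j / j.factorial) z := by
    have := HasDerivAt.fun_sum (u := range (n + 1)) fun j _ => (hasDerivAt_pow j z).div_const
      (j.factorial : ℂ)
    refine this.congr_deriv ?_
    rw [sum_range_succ']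
    simp only [Nat.factorial_succ, Nat.cast_mul, Nat.add_sub_cancel, CharP.cast_eq_zero, zero_mul,
      zero_div, add_zero]
    refine sum_congr rfl fun j _ => ?_
    field_simp
  exact (Complex.hasDerivAt_exp z).sub hsum

theorem contDiff_expTail (n : ℕ) {N : WithTop ℕ∞} : ContDiff ℂ N (expTail n) :=
  Complex.contDiff_exp.sub (ContDiff.sum fun j _ => (contDiff_id.pow j).div_const _)

theorem hasDerivAt_expTail_succ_comp_mul (n : ℕ) (l : ℂ) (u : ℝ) :
    HasDerivAt (fun u : ℝ => expTail (n + 1) (u * l)) (l * expTail n (u * l)) u := by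
  simpa [mul_comm l] using
    ((hasDerivAt_expTail_succ n _).comp (u : ℂ) ((hasDerivAt_id _).mul_const l)).comp_ofReal

theorem iteratedDeriv_expTail_comp_mul {n k : ℕ} (hk : k ≤ n) (l : ℂ) :
    iteratedDeriv k (fun u : ℝ => expTail n (u * l)) =
      fun u : ℝ => l ^ k * expTail (n - k) (u * l) := by
  induction k with
  | zero => simp
  | succ k ih =>
    obtain ⟨p, hp⟩ : ∃ p, n - k = p + 1 := ⟨n - k - 1, by omega⟩
    rw [iteratedDeriv_succ, ih (by omega), hp, show n - (k + 1) = p by omega]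
    ext u
    rw [((hasDerivAt_expTail_succ_comp_mul p l u).const_mul (l ^ k)).deriv, pow_succ, mul_assoc]

theorem norm_expTail_mul_le (n : ℕ) {t : ℝ} (ht : 0 ≤ t) {l : ℂ} (hl : 0 ≤ l.re) :
    ‖expTail n (t * l)‖ ≤ (t * ‖l‖) ^ n * Real.exp (t * l.re) := by
  induction n generalizing t with
  | zero => simp [Complex.norm_exp]
  | succ n ih =>
    have hbound : ∀ s ∈ Set.Ico 0 t,
        ‖l * expTail n (s * l)‖ ≤ ‖l‖ * ((t * ‖l‖) ^ n * Real.exp (t * l.re)) := by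
      rintro s ⟨hs0, hst⟩
      rw [norm_mul]
      gcongr
      refine (ih hs0).trans ?_
      gcongr
    have := norm_image_sub_le_of_norm_deriv_le_segment'
      (fun s _ => (hasDerivAt_expTail_succ_comp_mul n l s).hasDerivWithinAt) hbound t
      ⟨ht, le_rfl⟩
    simp only [Complex.ofReal_zero, zero_mul, expTail_succ_apply_zero, sub_zero] at this
    exact this.trans_eq (by ring)

theorem norm_iteratedDeriv_expTail_comp_mul_le {n k : ℕ} (hk : k ≤ n) {t : ℝ} (ht : 0 ≤ t) {l : ℂ}
    (hl : 0 ≤ l.re) :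
    ‖iteratedDeriv k (fun u : ℝ => expTail n (u * l)) t‖ ≤
      ‖l‖ ^ n * t ^ (n - k) * Real.exp (t * l.re) := by
  rw [iteratedDeriv_expTail_comp_mul hk, norm_mul, norm_pow]
  calc _ ≤ ‖l‖ ^ k * ((t * ‖l‖) ^ (n - k) * Real.exp (t * l.re)) := by
        gcongr; exact norm_expTail_mul_le _ ht hl
    _ = _ := by
      rw [mul_pow, ← Nat.add_sub_cancel' hk, pow_add, Nat.add_sub_cancel_left]; ring

theorem statement_8_general (a : ℝ) (m : ℕ) :
    ∃ C : ℝ, 0 < C ∧ ∀ (t : ℝ), 0 < t → ∀ (l : ℂ), 0 < l.re →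
      ‖(iteratedDeriv (m + 1) (fun u : ℝ => ((u ^ a : ℝ) : ℂ) * ek m ((u : ℂ) * l)) t)‖
        ≤ C * t ^ a * ‖l‖ ^ (m + 1) * Real.exp (t * l.re) := by
  set c : ℕ → ℝ := fun i => (m + 1).choose i * |(descPochhammer ℝ i).eval a|
  refine ⟨∑ i ∈ range (m + 2), c i, ?_, fun t ht l hl => ?_⟩
  · exact sum_pos' (fun i _ => by positivity) ⟨0, by simp, by simp [c]⟩
  have hsmul : (fun u : ℝ => ((u ^ a : ℝ) : ℂ) * ek m ((u : ℂ) * l)) =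
      (fun u : ℝ => u ^ a) • fun u : ℝ => expTail (m + 1) (u * l) := by
    ext u; simp [ek_eq_expTail, Complex.real_smul]
  have hf : ContDiffAt ℝ (m + 1 : ℕ) (fun u : ℝ => u ^ a) t :=
    Real.contDiffAt_rpow_const_of_ne ht.ne'
  have hg : ContDiffAt ℝ (m + 1 : ℕ) (fun u : ℝ => expTail (m + 1) (u * l)) t :=
    (((contDiff_expTail _).restrict_scalars ℝ).comp
      (Complex.ofRealCLM.contDiff.mul contDiff_const)).contDiffAt
  rw [hsmul, sum_mul, sum_mul, sum_mul]
  refine (norm_iteratedDeriv_smul_le hf hg).trans (sum_le_sum fun i hi_mem => ?_)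
  have hi : i ≤ m + 1 := Nat.lt_succ_iff.mp (mem_range.mp hi_mem)
  have hg_le := norm_iteratedDeriv_expTail_comp_mul_le (Nat.sub_le (m + 1) i) ht.le hl.le
  rw [Nat.sub_sub_self hi] at hg_le
  calc _ ≤ (m + 1).choose i * (|(descPochhammer ℝ i).eval a| * t ^ a / t ^ i *
          (‖l‖ ^ (m + 1) * t ^ i * Real.exp (t * l.re))) := by
        rw [norm_iteratedDeriv_rpow_const ht]; gcongr
    _ = c i * t ^ a * ‖l‖ ^ (m + 1) * Real.exp (t * l.re) := by
        simp only [c]; field_simp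

theorem statement_8 (a : ℝ) (m : ℕ) (hm : 1 ≤ m) :
    ∃ C : ℝ, 0 < C ∧ ∀ (t : ℝ), 0 < t → ∀ (l : ℂ), 0 < l.re →
      ‖(iteratedDeriv (m + 1) (fun u : ℝ => ((u ^ a : ℝ) : ℂ) * ek m ((u : ℂ) * l)) t)‖
        ≤ C * t ^ a * ‖l‖ ^ (m + 1) * Real.exp (t * l.re) :=
  statement_8_general a m
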